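/- arXiv:2109.14815 — 4 statements merged into one kernel-verified Lean document; each statement's English description precedes it below -/
import Mathlib

section
/- Let μ, μ̄ ∈ ℝ, r₁₃ > 0, Ω₃ > 0, θ₃ ∈ ℝ and (x, y, p_x, p_y) ∈ ℝ⁴. Define (x', y') = R₋θ₃(x+μ, y), the rotated velocity (u, v) = R₋θ₃(p_x + y, p_y − x), and x̄ = x'/r₁₃ − μ̄, ȳ = y'/r₁₃, v̄_x = (u + (Ω₃−1)y')/(r₁₃Ω₃), v̄_y = (v − (Ω₃−1)x')/(r₁₃Ω₃). Then the transformed momenta p̄_x := v̄_x − ȳ and p̄_y := v̄_y + x̄ satisfy the closed-form identities p̄_x = [R₋θ₃(p_x, p_y + μ)]₁/(r₁₃Ω₃) and p̄_y = [R₋θ₃(p_x, p_y + μ)]₂/(r₁₃Ω₃) − μ̄, where [·]₁, [·]₂ denote the first and second components. -/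
open Real

/-- Eq. (7) of the paper. The transformed momenta
`p̄ₓ = v̄ₓ − ȳ` and `p̄_y = v̄_y + x̄` obtained from the m₁-m₃ frame apparent
velocity satisfy the closed-form identities
`p̄ₓ = [R_{−θ₃}(pₓ, p_y + μ)]₁ / (r₁₃Ω₃)` and
`p̄_y = [R_{−θ₃}(pₓ, p_y + μ)]₂ / (r₁₃Ω₃) − μ̄`. -/
theorem m1m3_momenta_closed_form
    (μ μBar r₁₃ Ω₃ θ₃ x y px py : ℝ) (hr : 0 < r₁₃) (hΩ : 0 < Ω₃)
    (x' y' u v xBar yBar vBarx vBary pBarx pBary : ℝ)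
    (hx' : x' = (x + μ) * Real.cos θ₃ + y * Real.sin θ₃)
    (hy' : y' = -((x + μ) * Real.sin θ₃) + y * Real.cos θ₃)
    (hu : u = (px + y) * Real.cos θ₃ + (py - x) * Real.sin θ₃)
    (hv : v = -((px + y) * Real.sin θ₃) + (py - x) * Real.cos θ₃)
    (hxBar : xBar = x' / r₁₃ - μBar)
    (hyBar : yBar = y' / r₁₃)
    (hvBarx : vBarx = (u + (Ω₃ - 1) * y') / (r₁₃ * Ω₃))
    (hvBary : vBary = (v - (Ω₃ - 1) * x') / (r₁₃ * Ω₃))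
    (hpBarx : pBarx = vBarx - yBar)
    (hpBary : pBary = vBary + xBar) :
    pBarx = (px * Real.cos θ₃ + (py + μ) * Real.sin θ₃) / (r₁₃ * Ω₃) ∧
    pBary = (-(px * Real.sin θ₃) + (py + μ) * Real.cos θ₃) / (r₁₃ * Ω₃) - μBar := by
  subst hpBarx hpBary hvBarx hvBary hxBar hyBar hx' hy' hu hv
  constructor <;> field_simp <;> ring
end

section
/- Let 0 < μ < 1, μ₃ > 0, Ω₃ > 0, r₁₃ > 0 satisfy Kepler's relation Ω₃²·r₁₃³ = 1 − μ + μ₃, and set μ̄ = μ₃/(1−μ+μ₃), μ̄₂ = μ/(1−μ+μ₃), r̄₁₂ = 1/r₁₃, Ω̄₂ = 1/Ω₃, and θ₂,₀ = −θ₃,₀. Suppose γ = (x, y, p_x, p_y) : I → ℝ⁴ is differentiable on an open interval I and solves the m₁-m₂ frame CCR4BP equations of motion with θ₃(t) = (Ω₃−1)t + θ₃,₀ on I, with r₁(t), r₂(t), r₃(t) > 0 throughout. Then the curve γ̄(t̄) := Φ_{θ₃(t̄/Ω₃)}(γ(t̄/Ω₃)), defined for t̄ ∈ Ω₃·I, solves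 the m₁-m₃ frame CCR4BP equations of motion with parameters (μ̄, μ̄₂, r̄₁₂) and θ₂(t̄) = (Ω̄₂−1)t̄ + θ₂,₀; in particular θ₂(Ω₃t) = −θ₃(t) for all t ∈ I. (This is the equivalence of Eq. (2) and Eq. (4) of the paper through Φ_θ₃ and the time rescaling Ω₃ dt = dt̄.) -/
open Real

/-- `IsCCR4BPSolution μ μp rp Ωp θ₀ I x y px py` means that `t ↦ (x t, y t, px t, py t)`
solves, on the set `I`, the planar CCR4BP equations of motion in the synodic frame of the
primary (mass ratio `μ`) and secondary, perturbed by a third body of mass ratio `μp`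
revolving at radius `rp` with inertial angular rate `Ωp`, whose phase angle is
`θ(t) = (Ωp − 1)t + θ₀`:
`ẋ = pₓ + y`, `ẏ = p_y − x`,
`ṗₓ = p_y − (1−μ)(x+μ)/r₁³ − μ(x−(1−μ))/r₂³ − μp(x−x₃)/r₃³ − μp cos θ / rp²`,
`ṗ_y = −pₓ − (1−μ)y/r₁³ − μ y/r₂³ − μp(y−y₃)/r₃³ − μp sin θ / rp²`,
where `(x₃, y₃) = (−μ + rp cos θ, rp sin θ)`, `r₁ = √((x+μ)²+y²)`,
`r₂ = √((x−1+μ)²+y²)`, `r₃ = √((x−x₃)²+(y−y₃)²)`. -/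
def IsCCR4BPSolution (μ μp rp Ωp θ₀ : ℝ) (I : Set ℝ) (x y px py : ℝ → ℝ) : Prop :=
  ∀ t ∈ I,
    let θ := (Ωp - 1) * t + θ₀
    let x₃ := -μ + rp * Real.cos θ
    let y₃ := rp * Real.sin θ
    let r₁ := Real.sqrt ((x t + μ) ^ 2 + (y t) ^ 2)
    let r₂ := Real.sqrt ((x t - 1 + μ) ^ 2 + (y t) ^ 2)
    let r₃ := Real.sqrt ((x t - x₃) ^ 2 + (y t - y₃) ^ 2)
    HasDerivAt x (px t + y t) t ∧
    HasDerivAt y (py t - x t) t ∧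
    HasDerivAt px
      (py t - (1 - μ) * (x t + μ) / r₁ ^ 3 - μ * (x t - (1 - μ)) / r₂ ^ 3
        - μp * (x t - x₃) / r₃ ^ 3 - μp * Real.cos θ / rp ^ 2) t ∧
    HasDerivAt py
      (-(px t) - (1 - μ) * (y t) / r₁ ^ 3 - μ * (y t) / r₂ ^ 3
        - μp * (y t - y₃) / r₃ ^ 3 - μp * Real.sin θ / rp ^ 2) t

/-!
`Φ_θ₃` translates the origin to `m₁`, rotates by `−θ₃` and scales lengths by `1 / r₁₃` (momenta
also by `1 / Ω₃`). In the m₁-m₂ frame the line m₁-m₃ turns at rate `Ω₃ − 1`; together with the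
time rescaling `Ω₃ dt = dt̄` this turns the Coriolis terms of one frame into those of the other.
Each inverse-square attraction is covariant under the similarity (it picks up a factor `r₁₃²`),
and Kepler's relation `Ω₃² r₁₃³ = 1 − μ + μ₃` turns the masses, divided by `1 − μ + μ₃`, into
the mass ratios of the new frame.
-/

noncomputable section

namespace CCR4BP

/-- `(rotNegX θ u v, rotNegY θ u v) = R₋θ (u, v)`. -/
def rotNegX (θ u v : ℝ) : ℝ := u * cos θ + v * sin θ
def rotNegY (θ u v : ℝ) : ℝ := -(u * sin θ) + v * cos θ

theorem rotNegX_sq_add_rotNegY_sq (θ u v : ℝ) :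
    rotNegX θ u v ^ 2 + rotNegY θ u v ^ 2 = u ^ 2 + v ^ 2 := by
  unfold rotNegX rotNegY
  linear_combination (u ^ 2 + v ^ 2) * sin_sq_add_cos_sq θ

/-- `newtonX u v = 0 = newtonY u v` at a collision `(u, v) = 0`, as `x / 0 = 0`. -/
def newtonX (u v : ℝ) : ℝ := u / √(u ^ 2 + v ^ 2) ^ 3
def newtonY (u v : ℝ) : ℝ := v / √(u ^ 2 + v ^ 2) ^ 3

theorem sqrt_rotNeg_div {r : ℝ} (hr : 0 ≤ r) (θ u v : ℝ) :
    √((rotNegX θ u v / r) ^ 2 + (rotNegY θ u v / r) ^ 2) = √(u ^ 2 + v ^ 2) / r := by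
  rw [div_pow, div_pow, ← add_div, rotNegX_sq_add_rotNegY_sq, sqrt_div' _ (sq_nonneg r), sqrt_sq hr]

theorem newtonX_eq_of_eq_rotNeg {r θ u v a b : ℝ} (hr : 0 < r) (ha : a = rotNegX θ u v / r)
    (hb : b = rotNegY θ u v / r) : newtonX a b = r ^ 2 * rotNegX θ (newtonX u v) (newtonY u v) := by
  rw [ha, hb, newtonX, sqrt_rotNeg_div hr.le, newtonX, newtonY, rotNegX, rotNegX]
  field_simp

theorem newtonY_eq_of_eq_rotNeg {r θ u v a b : ℝ} (hr : 0 < r) (ha : a = rotNegX θ u v / r)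
    (hb : b = rotNegY θ u v / r) : newtonY a b = r ^ 2 * rotNegY θ (newtonX u v) (newtonY u v) := by
  rw [ha, hb, newtonY, sqrt_rotNeg_div hr.le, newtonX, newtonY, rotNegY, rotNegY]
  field_simp

def accelX (μ μp rp θ x y : ℝ) : ℝ :=
  (1 - μ) * newtonX (x + μ) y + μ * newtonX (x - (1 - μ)) y
    + μp * newtonX (x - (-μ + rp * cos θ)) (y - rp * sin θ) + μp * cos θ / rp ^ 2

def accelY (μ μp rp θ x y : ℝ) : ℝ :=
  (1 - μ) * newtonY (x + μ) y + μ * newtonY (x - (1 - μ)) y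
    + μp * newtonY (x - (-μ + rp * cos θ)) (y - rp * sin θ) + μp * sin θ / rp ^ 2

theorem isCCR4BPSolution_iff_accel {μ μp rp Ωp θ₀ : ℝ} {I : Set ℝ} {x y px py : ℝ → ℝ} :
    IsCCR4BPSolution μ μp rp Ωp θ₀ I x y px py ↔ ∀ t ∈ I,
      HasDerivAt x (px t + y t) t ∧ HasDerivAt y (py t - x t) t ∧
      HasDerivAt px (py t - accelX μ μp rp ((Ωp - 1) * t + θ₀) (x t) (y t)) t ∧
      HasDerivAt py (-px t - accelY μ μp rp ((Ωp - 1) * t + θ₀) (x t) (y t)) t := by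
  simp only [IsCCR4BPSolution, accelX, accelY, newtonX, newtonY, sub_add, mul_div_assoc,
    sub_add_eq_sub_sub]

/-- The components of `Φ_θ`, with `r = r₁₃`, `Ω = Ω₃`, `μBar = μ̄`. -/
def framePosX (μ μBar r θ x y : ℝ) : ℝ := rotNegX θ (x + μ) y / r - μBar
def framePosY (μ r θ x y : ℝ) : ℝ := rotNegY θ (x + μ) y / r
def frameMomX (μ r Ω θ px py : ℝ) : ℝ := rotNegX θ px (py + μ) / (r * Ω)
def frameMomY (μ μBar r Ω θ px py : ℝ) : ℝ := rotNegY θ px (py + μ) / (r * Ω) - μBar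

theorem accel_framePos {μ μ₃ Ω r μBar μBar₂ : ℝ} (hΩ : Ω ≠ 0) (hr : 0 < r)
    (hKepler : Ω ^ 2 * r ^ 3 = 1 - μ + μ₃)
    (hμBar : μBar = μ₃ / (1 - μ + μ₃)) (hμBar₂ : μBar₂ = μ / (1 - μ + μ₃)) (θ x y : ℝ) :
    accelX μBar μBar₂ (1 / r) (-θ) (framePosX μ μBar r θ x y) (framePosY μ r θ x y) =
        rotNegX θ (accelX μ μ₃ r θ x y + μ) (accelY μ μ₃ r θ x y) / (r * Ω ^ 2) - μBar ∧
      accelY μBar μBar₂ (1 / r) (-θ) (framePosX μ μBar r θ x y) (framePosY μ r θ x y) =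
        rotNegY θ (accelX μ μ₃ r θ x y + μ) (accelY μ μ₃ r θ x y) / (r * Ω ^ 2) := by
  have hr₀ := hr.ne'
  have e₁ : framePosX μ μBar r θ x y + μBar = rotNegX θ (x + μ) y / r := by
    unfold framePosX; ring
  have f₁ : framePosY μ r θ x y = rotNegY θ (x + μ) y / r := rfl
  have e₂ : framePosX μ μBar r θ x y - (-μBar + 1 / r * cos (-θ)) =
      rotNegX θ (x - (1 - μ)) y / r := by
    unfold framePosX rotNegX; rw [cos_neg]; field_simp; ring
  have f₂ : framePosY μ r θ x y - 1 / r * sin (-θ) = rotNegY θ (x - (1 - μ)) y / r := by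
    unfold framePosY rotNegY; rw [sin_neg]; field_simp; ring
  have e₃ : framePosX μ μBar r θ x y - (1 - μBar) =
      rotNegX θ (x - (-μ + r * cos θ)) (y - r * sin θ) / r := by
    unfold framePosX rotNegX; field_simp; linear_combination r * sin_sq_add_cos_sq θ
  have f₃ : framePosY μ r θ x y = rotNegY θ (x - (-μ + r * cos θ)) (y - r * sin θ) / r := by
    unfold framePosY rotNegY; field_simp; ring
  have h₁ : 1 - μBar = (1 - μ) / (Ω ^ 2 * r ^ 3) := by
    rw [hμBar, ← hKepler]; field_simp; linarith
  simp only [accelX, accelY]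
  rw [newtonX_eq_of_eq_rotNeg hr e₁ f₁, newtonX_eq_of_eq_rotNeg hr e₂ f₂,
    newtonX_eq_of_eq_rotNeg hr e₃ f₃, newtonY_eq_of_eq_rotNeg hr e₁ f₁,
    newtonY_eq_of_eq_rotNeg hr e₂ f₂, newtonY_eq_of_eq_rotNeg hr e₃ f₃, cos_neg, sin_neg, h₁,
    hμBar, hμBar₂, ← hKepler]
  unfold rotNegX rotNegY
  constructor
  -- the old indirect term of `m₃` becomes `μ̄ e₁`, cancelling `- μBar`
  · linear_combination (norm := skip) (-μ₃ / (Ω ^ 2 * r ^ 3)) * sin_sq_add_cos_sq θ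
    field_simp
    ring
  · field_simp
    ring

theorem hasDerivAt_rotNegX {θ u v : ℝ → ℝ} {ω u' v' t : ℝ} (hθ : HasDerivAt θ ω t)
    (hu : HasDerivAt u u' t) (hv : HasDerivAt v v' t) :
    HasDerivAt (fun t => rotNegX (θ t) (u t) (v t))
      (rotNegX (θ t) u' v' + ω * rotNegY (θ t) (u t) (v t)) t := by
  refine ((hu.mul hθ.cos).add (hv.mul hθ.sin)).congr_deriv ?_
  unfold rotNegX rotNegY
  ring

theorem hasDerivAt_rotNegY {θ u v : ℝ → ℝ} {ω u' v' t : ℝ} (hθ : HasDerivAt θ ω t)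
    (hu : HasDerivAt u u' t) (hv : HasDerivAt v v' t) :
    HasDerivAt (fun t => rotNegY (θ t) (u t) (v t))
      (rotNegY (θ t) u' v' - ω * rotNegX (θ t) (u t) (v t)) t := by
  refine ((hu.mul hθ.sin).neg.add (hv.mul hθ.cos)).congr_deriv ?_
  unfold rotNegX rotNegY
  ring

theorem _root_.HasDerivAt.comp_div_const {f : ℝ → ℝ} {f' c t : ℝ} (hc : c ≠ 0)
    (hf : HasDerivAt f f' t) : HasDerivAt (fun s => f (s / c)) (f' / c) (c * t) := by
  rw [← mul_div_cancel_left₀ t hc] at hf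
  exact (hf.comp (c * t) ((hasDerivAt_id _).div_const c)).congr_deriv (mul_one_div f' c)

section Rescaled

variable {μ μBar r Ω θ₀ t : ℝ} {x y px py : ℝ → ℝ}

theorem hasDerivAt_phase : HasDerivAt (fun t => (Ω - 1) * t + θ₀) (Ω - 1) t :=
  ((hasDerivAt_id t).const_mul _).add_const _ |>.congr_deriv (mul_one _)

theorem hasDerivAt_framePosX (hΩ : Ω ≠ 0) (hx : HasDerivAt x (px t + y t) t)
    (hy : HasDerivAt y (py t - x t) t) :
    HasDerivAt (fun s => framePosX μ μBar r ((Ω - 1) * (s / Ω) + θ₀) (x (s / Ω)) (y (s / Ω)))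
      (frameMomX μ r Ω ((Ω - 1) * t + θ₀) (px t) (py t) +
        framePosY μ r ((Ω - 1) * t + θ₀) (x t) (y t)) (Ω * t) := by
  refine ((((hasDerivAt_rotNegX hasDerivAt_phase (hx.add_const μ) hy).div_const r).sub_const
    μBar).comp_div_const hΩ).congr_deriv ?_
  unfold frameMomX framePosY rotNegX rotNegY
  field_simp
  ring

theorem hasDerivAt_framePosY (hΩ : Ω ≠ 0) (hx : HasDerivAt x (px t + y t) t)
    (hy : HasDerivAt y (py t - x t) t) :
    HasDerivAt (fun s => framePosY μ r ((Ω - 1) * (s / Ω) + θ₀) (x (s / Ω)) (y (s / Ω)))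
      (frameMomY μ μBar r Ω ((Ω - 1) * t + θ₀) (px t) (py t) -
        framePosX μ μBar r ((Ω - 1) * t + θ₀) (x t) (y t)) (Ω * t) := by
  refine (((hasDerivAt_rotNegY hasDerivAt_phase (hx.add_const μ) hy).div_const r).comp_div_const
    hΩ).congr_deriv ?_
  unfold frameMomY framePosX rotNegX rotNegY
  field_simp
  ring

theorem hasDerivAt_frameMomX {A B : ℝ} (hΩ : Ω ≠ 0) (hpx : HasDerivAt px (py t - A) t)
    (hpy : HasDerivAt py (-px t - B) t) :
    HasDerivAt (fun s => frameMomX μ r Ω ((Ω - 1) * (s / Ω) + θ₀) (px (s / Ω)) (py (s / Ω)))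
      (frameMomY μ μBar r Ω ((Ω - 1) * t + θ₀) (px t) (py t) -
        (rotNegX ((Ω - 1) * t + θ₀) (A + μ) B / (r * Ω ^ 2) - μBar)) (Ω * t) := by
  refine (((hasDerivAt_rotNegX hasDerivAt_phase hpx (hpy.add_const μ)).div_const (r * Ω))
    |>.comp_div_const hΩ).congr_deriv ?_
  unfold frameMomY rotNegX rotNegY
  field_simp
  ring

theorem hasDerivAt_frameMomY {A B : ℝ} (hΩ : Ω ≠ 0) (hpx : HasDerivAt px (py t - A) t)
    (hpy : HasDerivAt py (-px t - B) t) :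
    HasDerivAt
      (fun s => frameMomY μ μBar r Ω ((Ω - 1) * (s / Ω) + θ₀) (px (s / Ω)) (py (s / Ω)))
      (-frameMomX μ r Ω ((Ω - 1) * t + θ₀) (px t) (py t) -
        rotNegY ((Ω - 1) * t + θ₀) (A + μ) B / (r * Ω ^ 2)) (Ω * t) := by
  refine ((((hasDerivAt_rotNegY hasDerivAt_phase hpx (hpy.add_const μ)).div_const (r * Ω))
    |>.sub_const μBar).comp_div_const hΩ).congr_deriv ?_
  unfold frameMomX rotNegX rotNegY
  field_simp
  ring

end Rescaled

end CCR4BP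

end

open CCR4BP

theorem ccr4bp_frame_equivalence_general
    (μ μ₃ Ω₃ r₁₃ θ₃₀ a b : ℝ)
    (hΩ : 0 < Ω₃) (hr : 0 < r₁₃)
    (hKepler : Ω₃ ^ 2 * r₁₃ ^ 3 = 1 - μ + μ₃)
    (μBar μBar₂ rBar₁₂ ΩBar₂ θ₂₀ : ℝ)
    (hμBar : μBar = μ₃ / (1 - μ + μ₃)) (hμBar₂ : μBar₂ = μ / (1 - μ + μ₃))
    (hrBar : rBar₁₂ = 1 / r₁₃) (hΩBar : ΩBar₂ = 1 / Ω₃) (hθ₂₀ : θ₂₀ = -θ₃₀)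
    (x y px py : ℝ → ℝ)
    (hsol : IsCCR4BPSolution μ μ₃ r₁₃ Ω₃ θ₃₀ (Set.Ioo a b) x y px py)
    (xBar yBar pxBar pyBar : ℝ → ℝ)
    (hxBar : ∀ s : ℝ, xBar s =
      ((x (s / Ω₃) + μ) * Real.cos ((Ω₃ - 1) * (s / Ω₃) + θ₃₀)
        + y (s / Ω₃) * Real.sin ((Ω₃ - 1) * (s / Ω₃) + θ₃₀)) / r₁₃ - μBar)
    (hyBar : ∀ s : ℝ, yBar s =
      (-((x (s / Ω₃) + μ) * Real.sin ((Ω₃ - 1) * (s / Ω₃) + θ₃₀))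
        + y (s / Ω₃) * Real.cos ((Ω₃ - 1) * (s / Ω₃) + θ₃₀)) / r₁₃)
    (hpxBar : ∀ s : ℝ, pxBar s =
      (px (s / Ω₃) * Real.cos ((Ω₃ - 1) * (s / Ω₃) + θ₃₀)
        + (py (s / Ω₃) + μ) * Real.sin ((Ω₃ - 1) * (s / Ω₃) + θ₃₀)) / (r₁₃ * Ω₃))
    (hpyBar : ∀ s : ℝ, pyBar s =
      (-(px (s / Ω₃) * Real.sin ((Ω₃ - 1) * (s / Ω₃) + θ₃₀))
        + (py (s / Ω₃) + μ) * Real.cos ((Ω₃ - 1) * (s / Ω₃) + θ₃₀)) / (r₁₃ * Ω₃) - μBar) :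
    IsCCR4BPSolution μBar μBar₂ rBar₁₂ ΩBar₂ θ₂₀
      ((fun t => Ω₃ * t) '' Set.Ioo a b) xBar yBar pxBar pyBar ∧
    ∀ t ∈ Set.Ioo a b,
      (ΩBar₂ - 1) * (Ω₃ * t) + θ₂₀ = -((Ω₃ - 1) * t + θ₃₀) := by
  have hΩ₀ := hΩ.ne'
  have hphase (t : ℝ) : (ΩBar₂ - 1) * (Ω₃ * t) + θ₂₀ = -((Ω₃ - 1) * t + θ₃₀) := by
    rw [hΩBar, hθ₂₀]; field_simp; ring
  refine ⟨?_, fun t _ => hphase t⟩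
  obtain rfl : xBar = fun s =>
      framePosX μ μBar r₁₃ ((Ω₃ - 1) * (s / Ω₃) + θ₃₀) (x (s / Ω₃)) (y (s / Ω₃)) := funext hxBar
  obtain rfl : yBar = fun s =>
      framePosY μ r₁₃ ((Ω₃ - 1) * (s / Ω₃) + θ₃₀) (x (s / Ω₃)) (y (s / Ω₃)) := funext hyBar
  obtain rfl : pxBar = fun s =>
      frameMomX μ r₁₃ Ω₃ ((Ω₃ - 1) * (s / Ω₃) + θ₃₀) (px (s / Ω₃)) (py (s / Ω₃)) := funext hpxBar
  obtain rfl : pyBar = fun s =>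
      frameMomY μ μBar r₁₃ Ω₃ ((Ω₃ - 1) * (s / Ω₃) + θ₃₀) (px (s / Ω₃)) (py (s / Ω₃)) :=
    funext hpyBar
  rw [isCCR4BPSolution_iff_accel] at hsol ⊢
  rintro _ ⟨t, ht, rfl⟩
  obtain ⟨hx, hy, hpx, hpy⟩ := hsol t ht
  obtain ⟨hAx, hAy⟩ := accel_framePos hΩ₀ hr hKepler hμBar hμBar₂ ((Ω₃ - 1) * t + θ₃₀) (x t) (y t)
  simp only [hphase, hrBar, mul_div_cancel_left₀ t hΩ₀, hAx, hAy]
  exact ⟨hasDerivAt_framePosX hΩ₀ hx hy, hasDerivAt_framePosY hΩ₀ hx hy,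
    hasDerivAt_frameMomX hΩ₀ hpx hpy, hasDerivAt_frameMomY hΩ₀ hpx hpy⟩

/-- equivalence of Eq. (2) and Eq. (4) through `Φ_{θ₃}` and the time
rescaling `Ω₃ dt = dt̄`. If `γ = (x, y, pₓ, p_y)` solves the m₁-m₂ frame CCR4BP
equations of motion on an open interval `I` away from the singularities, and Kepler's
relation `Ω₃²r₁₃³ = 1 − μ + μ₃` holds, then
`γ̄(t̄) = Φ_{θ₃(t̄/Ω₃)}(γ(t̄/Ω₃))` solves the m₁-m₃ frame CCR4BP equations of motion on
`Ω₃ · I` with parameters `μ̄ = μ₃/(1−μ+μ₃)`, `μ̄₂ = μ/(1−μ+μ₃)`, `r̄₁₂ = 1/r₁₃`,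
`Ω̄₂ = 1/Ω₃` and phase `θ₂(t̄) = (Ω̄₂ − 1)t̄ + θ₂₀` with `θ₂₀ = −θ₃₀`; in particular
`θ₂(Ω₃t) = −θ₃(t)` for all `t ∈ I`. -/
theorem ccr4bp_frame_equivalence
    (μ μ₃ Ω₃ r₁₃ θ₃₀ a b : ℝ)
    (hμ0 : 0 < μ) (hμ1 : μ < 1) (hμ₃ : 0 < μ₃) (hΩ : 0 < Ω₃) (hr : 0 < r₁₃)
    (hKepler : Ω₃ ^ 2 * r₁₃ ^ 3 = 1 - μ + μ₃)
    (μBar μBar₂ rBar₁₂ ΩBar₂ θ₂₀ : ℝ)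
    (hμBar : μBar = μ₃ / (1 - μ + μ₃)) (hμBar₂ : μBar₂ = μ / (1 - μ + μ₃))
    (hrBar : rBar₁₂ = 1 / r₁₃) (hΩBar : ΩBar₂ = 1 / Ω₃) (hθ₂₀ : θ₂₀ = -θ₃₀)
    (x y px py : ℝ → ℝ)
    (hsol : IsCCR4BPSolution μ μ₃ r₁₃ Ω₃ θ₃₀ (Set.Ioo a b) x y px py)
    (hpos : ∀ t ∈ Set.Ioo a b,
      0 < Real.sqrt ((x t + μ) ^ 2 + (y t) ^ 2) ∧
      0 < Real.sqrt ((x t - 1 + μ) ^ 2 + (y t) ^ 2) ∧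
      0 < Real.sqrt ((x t - (-μ + r₁₃ * Real.cos ((Ω₃ - 1) * t + θ₃₀))) ^ 2 +
            (y t - r₁₃ * Real.sin ((Ω₃ - 1) * t + θ₃₀)) ^ 2))
    (xBar yBar pxBar pyBar : ℝ → ℝ)
    (hxBar : ∀ s : ℝ, xBar s =
      ((x (s / Ω₃) + μ) * Real.cos ((Ω₃ - 1) * (s / Ω₃) + θ₃₀)
        + y (s / Ω₃) * Real.sin ((Ω₃ - 1) * (s / Ω₃) + θ₃₀)) / r₁₃ - μBar)
    (hyBar : ∀ s : ℝ, yBar s =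
      (-((x (s / Ω₃) + μ) * Real.sin ((Ω₃ - 1) * (s / Ω₃) + θ₃₀))
        + y (s / Ω₃) * Real.cos ((Ω₃ - 1) * (s / Ω₃) + θ₃₀)) / r₁₃)
    (hpxBar : ∀ s : ℝ, pxBar s =
      (px (s / Ω₃) * Real.cos ((Ω₃ - 1) * (s / Ω₃) + θ₃₀)
        + (py (s / Ω₃) + μ) * Real.sin ((Ω₃ - 1) * (s / Ω₃) + θ₃₀)) / (r₁₃ * Ω₃))
    (hpyBar : ∀ s : ℝ, pyBar s =
      (-(px (s / Ω₃) * Real.sin ((Ω₃ - 1) * (s / Ω₃) + θ₃₀))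
        + (py (s / Ω₃) + μ) * Real.cos ((Ω₃ - 1) * (s / Ω₃) + θ₃₀)) / (r₁₃ * Ω₃) - μBar) :
    IsCCR4BPSolution μBar μBar₂ rBar₁₂ ΩBar₂ θ₂₀
      ((fun t => Ω₃ * t) '' Set.Ioo a b) xBar yBar pxBar pyBar ∧
    ∀ t ∈ Set.Ioo a b,
      (ΩBar₂ - 1) * (Ω₃ * t) + θ₂₀ = -((Ω₃ - 1) * t + θ₃₀) :=
  ccr4bp_frame_equivalence_general μ μ₃ Ω₃ r₁₃ θ₃₀ a b hΩ hr hKepler μBar μBar₂ rBar₁₂ ΩBar₂ θ₂₀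
    hμBar hμBar₂ hrBar hΩBar hθ₂₀ x y px py hsol xBar yBar pxBar pyBar hxBar hyBar hpxBar hpyBar
end

section
/- Under the hypotheses and notation of the frame-equivalence theorem (0 < μ < 1, μ₃ > 0, Ω₃ > 0 with Ω₃ ≠ 1, Ω₃²r₁₃³ = 1−μ+μ₃, μ̄ = μ₃/(1−μ+μ₃), μ̄₂ = μ/(1−μ+μ₃), r̄₁₂ = 1/r₁₃, Ω̄₂ = 1/Ω₃), let T = 2π/|Ω₃−1| and T̄ = 2π/|Ω̄₂−1|, and note T̄ = Ω₃T. Suppose γ solves the m₁-m₂ frame CCR4BP equations of motion with θ₃(t) = (Ω₃−1)t + θ₃,₀ on [t₀, t₀+T] with r₁, r₂, r₃ > 0 throughout. Then: (i) θ₃(t₀+T) = θ₃(t₀) ± 2π, so Φ_{θ₃(t₀+T)} = Φ_{θ₃(t₀)}; (ii) the curve γ̄(t̄) := Φ_{θ₃(t̄/Ω₃)}(γ(t̄/Ω₃)) solves the m₁-m₃ frame CCR4BP equations of motion with θ₂(t̄) = (Ω̄₂−1)t̄ − θ₃,₀ on [Ω₃t₀, Ω₃t₀+T̄]; and (iii)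 γ̄(Ω₃t₀) = Φ_{θ₃(t₀)}(γ(t₀)) and γ̄(Ω₃t₀+T̄) = Φ_{θ₃(t₀)}(γ(t₀+T)). Consequently the m₁-m₃ frame stroboscopic map applied to Φ_{θ₃(t₀)}(γ(t₀)) equals Φ_{θ₃(t₀)} applied to the m₁-m₂ frame stroboscopic image of γ(t₀): the two stroboscopic maps are conjugated by Φ_{θ₃(t₀)} (Eq. (13) of the paper, F_{μ̄₂} ∘ Φ_θ₃ = Φ_θ₃ ∘ F_{μ₃}). -/
/-!
In coordinates centred at `m₁` and complexified, `q = (x + μ) + i y` and `p = p_x + i (p_y + μ)`,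
the m₁-m₂ frame equations read `q̇ = p - i q`, `ṗ = -i p + F(q, θ₃)`, and `Φ_θ` becomes
`q ↦ e^{-iθ} q / r₁₃`, `p ↦ e^{-iθ} p / (r₁₃ Ω₃)`. Under the time change `t̄ = Ω₃ t` the factor
`e^{-iθ₃(t)}` absorbs the difference between the rotation rates of the two frames. Since the
inverse-square field is homogeneous of degree `-2`, Kepler's law `Ω₃² r₁₃³ = 1 - μ + μ₃` turns
`F` into the m₁-m₃ frame force with all masses divided by `1 - μ + μ₃` and the roles of `m₂` and
`m₃` exchanged. The endpoint identities hold because `θ₃` advances by exactly `±2π` over `T`.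
-/

open Real

/-- The frame-change map `Φ_θ` taking a CCR4BP state from the m₁-m₂ synodic frame to
the m₁-m₃ synodic frame when the angle between the frames' x-axes is `θ`. -/
noncomputable def phiMap (μ μBar r₁₃ Ω₃ θ : ℝ) (z : ℝ × ℝ × ℝ × ℝ) : ℝ × ℝ × ℝ × ℝ :=
  (((z.1 + μ) * Real.cos θ + z.2.1 * Real.sin θ) / r₁₃ - μBar,
   (-((z.1 + μ) * Real.sin θ) + z.2.1 * Real.cos θ) / r₁₃,
   (z.2.2.1 * Real.cos θ + (z.2.2.2 + μ) * Real.sin θ) / (r₁₃ * Ω₃),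
   (-(z.2.2.1 * Real.sin θ) + (z.2.2.2 + μ) * Real.cos θ) / (r₁₃ * Ω₃) - μBar)

open Complex

noncomputable def inverseSquare (z : ℂ) : ℂ := z / (‖z‖ ^ 3 : ℝ)

theorem inverseSquare_mul (a z : ℂ) :
    inverseSquare (a * z) = a / (‖a‖ ^ 3 : ℝ) * inverseSquare z := by
  simp only [inverseSquare, norm_mul, mul_pow, ofReal_mul, mul_div_mul_comm]

theorem inverseSquare_re (z : ℂ) : (inverseSquare z).re = z.re / √(z.re ^ 2 + z.im ^ 2) ^ 3 := by
  rw [inverseSquare, div_ofReal_re, norm_eq_sqrt_sq_add_sq]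

theorem inverseSquare_im (z : ℂ) : (inverseSquare z).im = z.im / √(z.re ^ 2 + z.im ^ 2) ^ 3 := by
  rw [inverseSquare, div_ofReal_im, norm_eq_sqrt_sq_add_sq]

/-- `1` and `cexp (θ * I) / rp ^ 2` are the indirect terms, the accelerations of `m₁` towards `m₂`
and towards the perturber. -/
noncomputable def ccr4bpAccel (μ μp rp θ : ℝ) (q : ℂ) : ℂ :=
  -(1 - μ) * inverseSquare q - μ * (inverseSquare (q - 1) + 1)
    - μp * (inverseSquare (q - rp * cexp (θ * I)) + cexp (θ * I) / rp ^ 2)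

theorem ccr4bpAccel_frame_change {μ μ₃ r Ω : ℝ} (hr : 0 < r) (hΩ : Ω ≠ 0)
    (hK : Ω ^ 2 * r ^ 3 = 1 - μ + μ₃) (φ : ℝ) (q : ℂ) :
    cexp (-φ * I) * ccr4bpAccel μ μ₃ r φ q / (r * Ω ^ 2) =
      ccr4bpAccel (μ₃ / (1 - μ + μ₃)) (μ / (1 - μ + μ₃)) (1 / r) (-φ)
        (cexp (-φ * I) * q / r) := by
  have hrot : cexp (-φ * I) * cexp (φ * I) = 1 := by
    rw [← Complex.exp_add, neg_mul, neg_add_cancel, Complex.exp_zero]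
  have hnorm : ‖cexp (-φ * I) / r‖ = 1 / r := by
    rw [norm_div, ← ofReal_neg, norm_exp_ofReal_mul_I, norm_real, Real.norm_of_nonneg hr.le]
  have hK' : (1 - μ + μ₃ : ℂ) = Ω ^ 2 * r ^ 3 := by exact_mod_cast hK.symm
  have hrC : (r : ℂ) ≠ 0 := by exact_mod_cast hr.ne'
  have hΩC : (Ω : ℂ) ≠ 0 := by exact_mod_cast hΩ
  simp only [ccr4bpAccel]
  push_cast
  generalize cexp (-φ * I) = e at *
  generalize cexp (φ * I) = c at *
  -- `q ↦ e / r * q` sends `m₁, m₃, m₂` at `0, r c, 1` to `0, 1, e / r`.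
  have hw : e * q / r = e / r * q := by ring
  have hw₃ : e / r * q - 1 = e / r * (q - r * c) := by
    field_simp; linear_combination ↑r * hrot
  have hw₂ : e / r * q - 1 / r * e = e / r * (q - 1) := by ring
  rw [hw, hw₃, hw₂, inverseSquare_mul, inverseSquare_mul, inverseSquare_mul, hnorm, hK']
  push_cast
  field_simp
  linear_combination (-(e * inverseSquare q * r ^ 2)) * hK' - μ₃ * hrot

theorem hasDerivAt_iff_re_im {f : ℝ → ℂ} {f' : ℂ} {t : ℝ} :
    HasDerivAt f f' t ↔
      HasDerivAt (fun s => (f s).re) f'.re t ∧ HasDerivAt (fun s => (f s).im) f'.im t := by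
  refine ⟨fun h => ⟨reCLM.hasFDerivAt.comp_hasDerivAt t h,
    imCLM.hasFDerivAt.comp_hasDerivAt t h⟩, fun ⟨hre, him⟩ => ?_⟩
  simpa only [re_add_im] using hre.ofReal_comp.fun_add (him.ofReal_comp.mul_const I)

def relPos (μ : ℝ) (z : ℝ × ℝ × ℝ × ℝ) : ℂ := ⟨z.1 + μ, z.2.1⟩

/-- Moving the origin to `m₁ = (-μ, 0)` shifts the rotating-frame momentum `p_y` by `μ`. -/
def relMom (μ : ℝ) (z : ℝ × ℝ × ℝ × ℝ) : ℂ := ⟨z.2.2.1, z.2.2.2 + μ⟩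

def IsCCR4BPRelSolution (μ μp rp Ωp θ₀ : ℝ) (J : Set ℝ) (q p : ℝ → ℂ) : Prop :=
  ∀ t ∈ J, HasDerivAt q (p t - I * q t) t ∧
    HasDerivAt p (-I * p t + ccr4bpAccel μ μp rp ((Ωp - 1) * t + θ₀) (q t)) t

theorem isCCR4BPSolution_iff {μ μp rp Ωp θ₀ : ℝ} {J : Set ℝ} {x y px py : ℝ → ℝ} :
    IsCCR4BPSolution μ μp rp Ωp θ₀ J x y px py ↔
      IsCCR4BPRelSolution μ μp rp Ωp θ₀ J (fun t => relPos μ (x t, y t, px t, py t))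
        (fun t => relMom μ (x t, y t, px t, py t)) := by
  refine forall₂_congr fun t _ => ?_
  rw [hasDerivAt_iff_re_im, hasDerivAt_iff_re_im]
  simp only [relPos, relMom, hasDerivAt_add_const_iff, ccr4bpAccel, ← and_assoc]
  generalize (Ωp - 1) * t + θ₀ = θ
  simp only [sub_re, mul_re, I_re, zero_mul, I_im, one_mul, zero_sub, sub_neg_eq_add, sub_im,
    mul_im, zero_add, add_sub_add_right_eq_sub, neg_mul, neg_sub, ← ofReal_pow, add_re, neg_re, neg_add_rev,
    neg_neg, ofReal_re, one_re, inverseSquare_re, ofReal_im, one_im, sub_self, inverseSquare_im,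
    sub_zero, add_im, add_zero, exp_ofReal_mul_I_re, exp_ofReal_mul_I_im, div_ofReal_re,
    div_ofReal_im, neg_im]
  refine and_congr (and_congr .rfl (iff_of_eq (congrArg (HasDerivAt px · t) ?_)))
    (iff_of_eq (congrArg (HasDerivAt py · t) ?_)) <;> ring_nf

theorem HasDerivAt.cexp_neg_mul_I_mul {f : ℝ → ℂ} {φ : ℝ → ℝ} {f' : ℂ} {φ' s : ℝ}
    (hf : HasDerivAt f f' s) (hφ : HasDerivAt φ φ' s) :
    HasDerivAt (fun s => cexp (-(φ s : ℂ) * I) * f s)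
      (cexp (-(φ s : ℂ) * I) * (f' - φ' * I * f s)) s := by
  refine (((hφ.ofReal_comp.fun_neg.mul_const I).cexp).mul hf).congr_deriv ?_
  ring

theorem IsCCR4BPRelSolution.frame_change {μ μ₃ r Ω θ₀ : ℝ} {J : Set ℝ} {q p : ℝ → ℂ}
    (h : IsCCR4BPRelSolution μ μ₃ r Ω θ₀ J q p) (hr : 0 < r) (hΩ : Ω ≠ 0)
    (hK : Ω ^ 2 * r ^ 3 = 1 - μ + μ₃) :
    IsCCR4BPRelSolution (μ₃ / (1 - μ + μ₃)) (μ / (1 - μ + μ₃)) (1 / r) (1 / Ω) (-θ₀)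
      ((· / Ω) ⁻¹' J)
      (fun s => cexp (-↑((Ω - 1) * (s / Ω) + θ₀) * I) * q (s / Ω) / r)
      (fun s => cexp (-↑((Ω - 1) * (s / Ω) + θ₀) * I) * p (s / Ω) / (r * Ω)) := by
  intro s hs
  obtain ⟨hq, hp⟩ := h (s / Ω) hs
  have hτ : HasDerivAt (· / Ω) (1 / Ω) s := (hasDerivAt_id s).div_const Ω
  have hφ : HasDerivAt (fun s => (Ω - 1) * (s / Ω) + θ₀) ((Ω - 1) * (1 / Ω)) s :=
    (hτ.const_mul _).add_const _
  have hphase : (1 / Ω - 1) * s + -θ₀ = -((Ω - 1) * (s / Ω) + θ₀) := by field_simp; ring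
  have hrC : (r : ℂ) ≠ 0 := by exact_mod_cast hr.ne'
  have hΩC : (Ω : ℂ) ≠ 0 := by exact_mod_cast hΩ
  rw [hphase, ← ccr4bpAccel_frame_change hr hΩ hK]
  constructor
  · refine (((hq.scomp s hτ).cexp_neg_mul_I_mul hφ).div_const (r : ℂ)).congr_deriv ?_
    simp only [Function.comp_apply, real_smul]
    push_cast
    field_simp
    ring
  · refine (((hp.scomp s hτ).cexp_neg_mul_I_mul hφ).div_const (r * Ω : ℂ)).congr_deriv ?_
    simp only [Function.comp_apply, real_smul]
    push_cast
    field_simp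
    ring

theorem cexp_neg_mul_I_mul_eq_mk (θ : ℝ) (z : ℂ) :
    cexp (-θ * I) * z =
      ⟨z.re * Real.cos θ + z.im * Real.sin θ, -(z.re * Real.sin θ) + z.im * Real.cos θ⟩ := by
  apply Complex.ext <;> simp [exp_re, exp_im] <;> ring

theorem relPos_phiMap (μ μBar r Ω θ : ℝ) (z : ℝ × ℝ × ℝ × ℝ) :
    relPos μBar (phiMap μ μBar r Ω θ z) = cexp (-θ * I) * relPos μ z / r := by
  rw [cexp_neg_mul_I_mul_eq_mk]
  apply Complex.ext <;> simp only [relPos, phiMap, div_ofReal_re, div_ofReal_im, sub_add_cancel]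

theorem relMom_phiMap (μ μBar r Ω θ : ℝ) (z : ℝ × ℝ × ℝ × ℝ) :
    relMom μBar (phiMap μ μBar r Ω θ z) = cexp (-θ * I) * relMom μ z / (r * Ω) := by
  rw [cexp_neg_mul_I_mul_eq_mk, ← ofReal_mul]
  apply Complex.ext <;> simp only [relMom, phiMap, div_ofReal_re, div_ofReal_im, sub_add_cancel]

theorem phiMap_periodic (μ μBar r Ω : ℝ) : Function.Periodic (phiMap μ μBar r Ω) (2 * π) := by
  intro θ
  funext z
  simp only [phiMap, Real.cos_add_two_pi, Real.sin_add_two_pi]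

theorem two_pi_div_abs_inv_sub_one {Ω : ℝ} (hΩ : 0 < Ω) :
    2 * π / |1 / Ω - 1| = Ω * (2 * π / |Ω - 1|) := by
  rw [show 1 / Ω - 1 = -(Ω - 1) / Ω by field_simp; ring, abs_div, abs_neg, abs_of_pos hΩ,
    div_div_eq_mul_div]
  ring

theorem mul_add_two_pi_div_abs {a : ℝ} (ha : a ≠ 0) (t θ : ℝ) :
    a * (t + 2 * π / |a|) + θ = a * t + θ + 2 * π ∨
      a * (t + 2 * π / |a|) + θ = a * t + θ - 2 * π := by
  rcases abs_choice a with h | h <;> rw [h]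
  · left; field_simp; ring
  · right; field_simp; ring

theorem ccr4bp_stroboscopic_conjugacy_general
    (μ μ₃ Ω₃ r₁₃ θ₃₀ t₀ : ℝ)
    (hΩ : 0 < Ω₃) (hΩ1 : Ω₃ ≠ 1)
    (hr : 0 < r₁₃) (hKepler : Ω₃ ^ 2 * r₁₃ ^ 3 = 1 - μ + μ₃)
    (μBar μBar₂ rBar₁₂ ΩBar₂ T TBar : ℝ)
    (hμBar : μBar = μ₃ / (1 - μ + μ₃)) (hμBar₂ : μBar₂ = μ / (1 - μ + μ₃))
    (hrBar : rBar₁₂ = 1 / r₁₃) (hΩBar : ΩBar₂ = 1 / Ω₃)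
    (hT : T = 2 * Real.pi / |Ω₃ - 1|) (hTBar : TBar = 2 * Real.pi / |ΩBar₂ - 1|)
    (x y px py : ℝ → ℝ)
    (hsol : IsCCR4BPSolution μ μ₃ r₁₃ Ω₃ θ₃₀ (Set.Icc t₀ (t₀ + T)) x y px py)
    (γBar : ℝ → ℝ × ℝ × ℝ × ℝ)
    (hγBar : ∀ s : ℝ, γBar s =
      phiMap μ μBar r₁₃ Ω₃ ((Ω₃ - 1) * (s / Ω₃) + θ₃₀)
        (x (s / Ω₃), y (s / Ω₃), px (s / Ω₃), py (s / Ω₃))) :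
    -- T̄ = Ω₃ T
    TBar = Ω₃ * T ∧
    -- (i) θ₃(t₀+T) = θ₃(t₀) ± 2π, hence Φ_{θ₃(t₀+T)} = Φ_{θ₃(t₀)}
    (((Ω₃ - 1) * (t₀ + T) + θ₃₀ = ((Ω₃ - 1) * t₀ + θ₃₀) + 2 * Real.pi) ∨
      ((Ω₃ - 1) * (t₀ + T) + θ₃₀ = ((Ω₃ - 1) * t₀ + θ₃₀) - 2 * Real.pi)) ∧
    phiMap μ μBar r₁₃ Ω₃ ((Ω₃ - 1) * (t₀ + T) + θ₃₀) =
      phiMap μ μBar r₁₃ Ω₃ ((Ω₃ - 1) * t₀ + θ₃₀) ∧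
    -- (ii) γ̄ solves the m₁-m₃ frame equations with θ₂(t̄) = (Ω̄₂−1)t̄ − θ₃₀
    IsCCR4BPSolution μBar μBar₂ rBar₁₂ ΩBar₂ (-θ₃₀)
      (Set.Icc (Ω₃ * t₀) (Ω₃ * t₀ + TBar))
      (fun s => (γBar s).1) (fun s => (γBar s).2.1)
      (fun s => (γBar s).2.2.1) (fun s => (γBar s).2.2.2) ∧
    -- (iii) endpoint identities: the stroboscopic maps are conjugated by Φ_{θ₃(t₀)}
    γBar (Ω₃ * t₀) =
      phiMap μ μBar r₁₃ Ω₃ ((Ω₃ - 1) * t₀ + θ₃₀) (x t₀, y t₀, px t₀, py t₀) ∧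
    γBar (Ω₃ * t₀ + TBar) =
      phiMap μ μBar r₁₃ Ω₃ ((Ω₃ - 1) * t₀ + θ₃₀)
        (x (t₀ + T), y (t₀ + T), px (t₀ + T), py (t₀ + T)) := by
  have hTBarT : TBar = Ω₃ * T := by rw [hTBar, hT, hΩBar, two_pi_div_abs_inv_sub_one hΩ]
  have hphase := hT ▸ mul_add_two_pi_div_abs (sub_ne_zero.2 hΩ1) t₀ θ₃₀
  have hΦ : phiMap μ μBar r₁₃ Ω₃ ((Ω₃ - 1) * (t₀ + T) + θ₃₀) =
      phiMap μ μBar r₁₃ Ω₃ ((Ω₃ - 1) * t₀ + θ₃₀) := by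
    rcases hphase with h | h <;> rw [h]
    exacts [phiMap_periodic _ _ _ _ _, (phiMap_periodic _ _ _ _).sub_eq _]
  refine ⟨hTBarT, hphase, hΦ, ?_, ?_, ?_⟩
  · have hrel := (isCCR4BPSolution_iff.1 hsol).frame_change hr hΩ.ne' hKepler
    have hset : Set.Icc (Ω₃ * t₀) (Ω₃ * t₀ + TBar) = (· / Ω₃) ⁻¹' Set.Icc t₀ (t₀ + T) := by
      ext s
      simp only [Set.mem_Icc, Set.mem_preimage, le_div_iff₀ hΩ, div_le_iff₀ hΩ, hTBarT]
      constructor <;> rintro ⟨h₁, h₂⟩ <;> constructor <;> linarith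
    subst hμBar hμBar₂ hrBar hΩBar
    rw [isCCR4BPSolution_iff, hset]
    convert hrel using 2 <;> simp only [Prod.mk.eta, hγBar, relPos_phiMap, relMom_phiMap]
  · rw [hγBar, mul_div_cancel_left₀ t₀ hΩ.ne']
  · rw [hγBar, show (Ω₃ * t₀ + TBar) / Ω₃ = t₀ + T by rw [hTBarT]; field_simp, hΦ]

/-- Eq. (13) of the paper, `F_{μ̄₂} ∘ Φ_{θ₃} = Φ_{θ₃} ∘ F_{μ₃}`.
With `T = 2π/|Ω₃−1|`, `T̄ = 2π/|Ω̄₂−1|` (so `T̄ = Ω₃T`), if `γ` solves the m₁-m₂ frame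
CCR4BP equations on `[t₀, t₀+T]` with phase `θ₃(t) = (Ω₃−1)t + θ₃₀`, then:
(i) `θ₃(t₀+T) = θ₃(t₀) ± 2π`, so `Φ_{θ₃(t₀+T)} = Φ_{θ₃(t₀)}`;
(ii) `γ̄(t̄) = Φ_{θ₃(t̄/Ω₃)}(γ(t̄/Ω₃))` solves the m₁-m₃ frame CCR4BP equations with
`θ₂(t̄) = (Ω̄₂−1)t̄ − θ₃₀` on `[Ω₃t₀, Ω₃t₀+T̄]`; and
(iii) `γ̄(Ω₃t₀) = Φ_{θ₃(t₀)}(γ(t₀))` and `γ̄(Ω₃t₀+T̄) = Φ_{θ₃(t₀)}(γ(t₀+T))`;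
hence the two stroboscopic maps are conjugated by `Φ_{θ₃(t₀)}`. -/
theorem ccr4bp_stroboscopic_conjugacy
    (μ μ₃ Ω₃ r₁₃ θ₃₀ t₀ : ℝ)
    (hμ0 : 0 < μ) (hμ1 : μ < 1) (hμ₃ : 0 < μ₃) (hΩ : 0 < Ω₃) (hΩ1 : Ω₃ ≠ 1)
    (hr : 0 < r₁₃) (hKepler : Ω₃ ^ 2 * r₁₃ ^ 3 = 1 - μ + μ₃)
    (μBar μBar₂ rBar₁₂ ΩBar₂ T TBar : ℝ)
    (hμBar : μBar = μ₃ / (1 - μ + μ₃)) (hμBar₂ : μBar₂ = μ / (1 - μ + μ₃))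
    (hrBar : rBar₁₂ = 1 / r₁₃) (hΩBar : ΩBar₂ = 1 / Ω₃)
    (hT : T = 2 * Real.pi / |Ω₃ - 1|) (hTBar : TBar = 2 * Real.pi / |ΩBar₂ - 1|)
    (x y px py : ℝ → ℝ)
    (hsol : IsCCR4BPSolution μ μ₃ r₁₃ Ω₃ θ₃₀ (Set.Icc t₀ (t₀ + T)) x y px py)
    (hpos : ∀ t ∈ Set.Icc t₀ (t₀ + T),
      0 < Real.sqrt ((x t + μ) ^ 2 + (y t) ^ 2) ∧
      0 < Real.sqrt ((x t - 1 + μ) ^ 2 + (y t) ^ 2) ∧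
      0 < Real.sqrt ((x t - (-μ + r₁₃ * Real.cos ((Ω₃ - 1) * t + θ₃₀))) ^ 2 +
            (y t - r₁₃ * Real.sin ((Ω₃ - 1) * t + θ₃₀)) ^ 2))
    (γBar : ℝ → ℝ × ℝ × ℝ × ℝ)
    (hγBar : ∀ s : ℝ, γBar s =
      phiMap μ μBar r₁₃ Ω₃ ((Ω₃ - 1) * (s / Ω₃) + θ₃₀)
        (x (s / Ω₃), y (s / Ω₃), px (s / Ω₃), py (s / Ω₃))) :
    -- T̄ = Ω₃ T
    TBar = Ω₃ * T ∧
    -- (i) θ₃(t₀+T) = θ₃(t₀) ± 2π, hence Φ_{θ₃(t₀+T)} = Φ_{θ₃(t₀)}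
    (((Ω₃ - 1) * (t₀ + T) + θ₃₀ = ((Ω₃ - 1) * t₀ + θ₃₀) + 2 * Real.pi) ∨
      ((Ω₃ - 1) * (t₀ + T) + θ₃₀ = ((Ω₃ - 1) * t₀ + θ₃₀) - 2 * Real.pi)) ∧
    phiMap μ μBar r₁₃ Ω₃ ((Ω₃ - 1) * (t₀ + T) + θ₃₀) =
      phiMap μ μBar r₁₃ Ω₃ ((Ω₃ - 1) * t₀ + θ₃₀) ∧
    -- (ii) γ̄ solves the m₁-m₃ frame equations with θ₂(t̄) = (Ω̄₂−1)t̄ − θ₃₀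
    IsCCR4BPSolution μBar μBar₂ rBar₁₂ ΩBar₂ (-θ₃₀)
      (Set.Icc (Ω₃ * t₀) (Ω₃ * t₀ + TBar))
      (fun s => (γBar s).1) (fun s => (γBar s).2.1)
      (fun s => (γBar s).2.2.1) (fun s => (γBar s).2.2.2) ∧
    -- (iii) endpoint identities: the stroboscopic maps are conjugated by Φ_{θ₃(t₀)}
    γBar (Ω₃ * t₀) =
      phiMap μ μBar r₁₃ Ω₃ ((Ω₃ - 1) * t₀ + θ₃₀) (x t₀, y t₀, px t₀, py t₀) ∧
    γBar (Ω₃ * t₀ + TBar) =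
      phiMap μ μBar r₁₃ Ω₃ ((Ω₃ - 1) * t₀ + θ₃₀)
        (x (t₀ + T), y (t₀ + T), px (t₀ + T), py (t₀ + T)) :=
  ccr4bp_stroboscopic_conjugacy_general μ μ₃ Ω₃ r₁₃ θ₃₀ t₀ hΩ hΩ1 hr hKepler μBar μBar₂ rBar₁₂ ΩBar₂
    T TBar hμBar hμBar₂ hrBar hΩBar hT hTBar x y px py hsol γBar hγBar
end

section
/- Let ω ∈ ℝ, μ₀ ∈ ℝ, and let F : ℝ × ℝ⁴ → ℝ⁴, (μ, z) ↦ F_μ(z), be differentiable jointly in (μ, z), and K : ℝ × ℝ → ℝ⁴ with μ ↦ K_μ(θ) differentiable and F_μ(K_μ(θ)) = K_μ(θ+ω) for all μ near μ₀ and all θ. Suppose P : ℝ → (4×4 real matrices) takes invertible values and Λ : ℝ → (4×4 real matrices) satisfies the bundle equation D_zF_{μ₀}(K_{μ₀}(θ)) · P(θ) = P(θ+ω) · Λ(θ) for all θ. Define ξ(θ) := P(θ)⁻¹ · (dK_μ/dμ)|_{μ₀}(θ). Then for all θ ∈ ℝ: Λ(θ)·ξ(θ) − ξ(θ+ω) =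 −P(θ+ω)⁻¹ · (dF_μ/dμ)|_{μ₀}(K_{μ₀}(θ)). -/
open Real Matrix

/-!
Differentiating the invariance equation `F_μ(K_μ(θ)) = K_μ(θ + ω)` in `μ` at `μ₀` gives, by the
chain rule, `∂_μK(θ + ω) = ∂_μF(K(θ)) + D_zF(K(θ)) ∂_μK(θ)`. Substituting `∂_μK = P ξ` and
`D_zF(K(θ)) P(θ) = P(θ + ω) Λ(θ)`, then multiplying by `P(θ + ω)⁻¹`, yields the cohomological
equation.
-/

section PartialDerivatives

variable {E G : Type*} [NormedAddCommGroup E] [NormedSpace ℝ E]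
  [NormedAddCommGroup G] [NormedSpace ℝ G]

theorem HasFDerivAt.hasDerivAt_comp_curve {f : ℝ → E → G} {k : ℝ → E} {μ₀ : ℝ} {a : E}
    {A : E →L[ℝ] G} (hA : HasFDerivAt (f μ₀) A (k μ₀))
    (hf : DifferentiableAt ℝ (fun p : ℝ × E => f p.1 p.2) (μ₀, k μ₀)) (hk : HasDerivAt k a μ₀) :
    HasDerivAt (fun μ => f μ (k μ)) (deriv (fun s => f s (k μ₀)) μ₀ + A a) μ₀ := by
  set L := fderiv ℝ (fun p : ℝ × E => f p.1 p.2) (μ₀, k μ₀)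
  have hL : HasFDerivAt (fun p : ℝ × E => f p.1 p.2) L (μ₀, k μ₀) := hf.hasFDerivAt
  have hμ : HasDerivAt (fun s => f s (k μ₀)) (L (1, 0)) μ₀ :=
    hL.comp_hasDerivAt (f := fun s => (s, k μ₀)) μ₀
      ((hasDerivAt_id μ₀).prodMk (hasDerivAt_const μ₀ (k μ₀)))
  have hz : A = L.comp (ContinuousLinearMap.inr ℝ ℝ E) :=
    hA.unique (hL.comp (k μ₀) ((hasFDerivAt_const μ₀ (k μ₀)).prodMk (hasFDerivAt_id (k μ₀))))
  have hsplit : L (1, a) = L (1, 0) + L (0, a) := by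
    rw [← map_add, Prod.mk_add_mk, add_zero, zero_add]
  rw [hμ.deriv, hz, ContinuousLinearMap.comp_apply, ContinuousLinearMap.inr_apply, ← hsplit]
  exact hL.comp_hasDerivAt (f := fun s => (s, k s)) μ₀ ((hasDerivAt_id μ₀).prodMk hk)

end PartialDerivatives

namespace Matrix

variable {n R : Type*} [Fintype n] [DecidableEq n] [CommRing R]

theorem mul_inv_eq_inv_mul_of_mul_eq_mul {A P₀ P₁ Λ : Matrix n n R} (hP₀ : IsUnit P₀.det)
    (hP₁ : IsUnit P₁.det) (h : A * P₀ = P₁ * Λ) : Λ * P₀⁻¹ = P₁⁻¹ * A := by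
  rw [← nonsing_inv_mul_cancel_left (A := P₁) Λ hP₁, ← h, Matrix.mul_assoc, Matrix.mul_assoc,
    mul_nonsing_inv P₀ hP₀, Matrix.mul_one]

theorem mulVec_inv_mulVec_sub_inv_mulVec_add_mulVec {A P₀ P₁ Λ : Matrix n n R}
    (hP₀ : IsUnit P₀.det) (hP₁ : IsUnit P₁.det) (h : A * P₀ = P₁ * Λ) (a c : n → R) :
    Λ *ᵥ (P₀⁻¹ *ᵥ a) - P₁⁻¹ *ᵥ (c + A *ᵥ a) = -(P₁⁻¹ *ᵥ c) := by
  rw [mulVec_mulVec, mul_inv_eq_inv_mul_of_mul_eq_mul hP₀ hP₁ h, ← mulVec_mulVec,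
    mulVec_add, sub_add_cancel_right]

end Matrix

/-- Eq. (17) of the paper, the cohomological equation for the
Lindstedt predictor. If `F_μ(K_μ(θ)) = K_μ(θ+ω)` for all `μ` near `μ₀`, the bundle
equation `D_zF_{μ₀}(K_{μ₀}(θ))P(θ) = P(θ+ω)Λ(θ)` holds with `P(θ)` invertible, and
`ξ(θ) = P(θ)⁻¹·(dK_μ/dμ)|_{μ₀}(θ)`, then
`Λ(θ)ξ(θ) − ξ(θ+ω) = −P(θ+ω)⁻¹·(dF_μ/dμ)|_{μ₀}(K_{μ₀}(θ))`. -/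
theorem lindstedt_cohomological_equation
    (ω μ₀ ε : ℝ) (hε : 0 < ε)
    (F : ℝ → (Fin 4 → ℝ) → (Fin 4 → ℝ))
    (hF : Differentiable ℝ (fun p : ℝ × (Fin 4 → ℝ) => F p.1 p.2))
    (K : ℝ → ℝ → (Fin 4 → ℝ))
    (hK : ∀ θ : ℝ, Differentiable ℝ (fun μ => K μ θ))
    (hinv : ∀ μ ∈ Set.Ioo (μ₀ - ε) (μ₀ + ε), ∀ θ : ℝ, F μ (K μ θ) = K μ (θ + ω))
    (DF : (Fin 4 → ℝ) → Matrix (Fin 4) (Fin 4) ℝ)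
    (hDF : ∀ z, HasFDerivAt (F μ₀) ((Matrix.mulVecLin (DF z)).toContinuousLinearMap) z)
    (P Λ : ℝ → Matrix (Fin 4) (Fin 4) ℝ)
    (hPunit : ∀ θ : ℝ, IsUnit (P θ))
    (hbundle : ∀ θ : ℝ, DF (K μ₀ θ) * P θ = P (θ + ω) * Λ θ)
    (ξ : ℝ → (Fin 4 → ℝ))
    (hξ : ∀ θ : ℝ, ξ θ = (P θ)⁻¹ *ᵥ deriv (fun s => K s θ) μ₀) :
    ∀ θ : ℝ,
      Λ θ *ᵥ ξ θ - ξ (θ + ω)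
        = -((P (θ + ω))⁻¹ *ᵥ deriv (fun s => F s (K μ₀ θ)) μ₀) := by
  intro θ
  have hinv_near : (fun μ => K μ (θ + ω)) =ᶠ[nhds μ₀] fun μ => F μ (K μ θ) :=
    Filter.eventuallyEq_of_mem (Ioo_mem_nhds (by linarith) (by linarith))
      fun μ hμ => (hinv μ hμ θ).symm
  have hdiff : HasDerivAt (fun μ => K μ (θ + ω))
      (deriv (fun s => F s (K μ₀ θ)) μ₀ + DF (K μ₀ θ) *ᵥ deriv (fun s => K s θ) μ₀) μ₀ :=
    ((hDF _).hasDerivAt_comp_curve (hF _) (hK θ μ₀).hasDerivAt).congr_of_eventuallyEq hinv_near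
  rw [hξ, hξ, hdiff.deriv]
  exact mulVec_inv_mulVec_sub_inv_mulVec_add_mulVec ((isUnit_iff_isUnit_det _).mp (hPunit θ))
    ((isUnit_iff_isUnit_det _).mp (hPunit (θ + ω))) (hbundle θ) _ _
end
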